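/- arXiv:math/0504172 — 2 statements merged into one kernel-verified Lean document; each statement's English description precedes it below -/
import Mathlib

section
/- If a = b = c = d in Euler's system, then any solution with v+x+y+z = 2t ≠ 0 and all of v,x,y,z ≤ t satisfies v = x = y = z, and 3v^2 = a; in particular for a > 0, v = x = y = z = √(a/3) (up to overall sign). -/
theorem stmt_16 (v x y z a t : ℝ)
    (ha : v * (x + y + z) = a) (hb : x * (v + y + z) = a)
    (hc : y * (v + x + z) = a) (hd : z * (v + x + y) = a)
    (ht : t = (v + x + y + z)/2) (htne : t ≠ 0)
    (hv : v ≤ t) (hx : x ≤ t) (hy : y ≤ t) (hz : z ≤ t) :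
    v = x ∧ x = y ∧ y = z ∧ 3*v^2 = a ∧
    (0 < a → v = Real.sqrt (a/3) ∨ v = -Real.sqrt (a/3)) := by
  have hsum : v + x + y + z = 2 * t := by linarith
  have hvx : v = x := by
    have h : (v - x) * (y + z) = 0 := by linear_combination ha - hb
    rcases mul_eq_zero.mp h with h' | h'
    · linarith
    · linarith
  have hxy : x = y := by
    have h : (x - y) * (v + z) = 0 := by linear_combination hb - hc
    rcases mul_eq_zero.mp h with h' | h'
    · linarith
    · linarith
  have hyz : y = z := by
    have h : (y - z) * (v + x) = 0 := by linear_combination hc - hd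
    rcases mul_eq_zero.mp h with h' | h'
    · linarith
    · linarith
  have hvt : v = t / 2 := by linarith
  have h3 : 3 * v ^ 2 = a := by
    subst hvx hxy hyz; nlinarith [ha]
  refine ⟨hvx, hxy, hyz, h3, fun hapos => ?_⟩
  have h13 : (0:ℝ) ≤ a / 3 := by linarith
  have hs := Real.sq_sqrt h13
  have h2 : (v - Real.sqrt (a/3)) * (v + Real.sqrt (a/3)) = 0 := by nlinarith
  rcases mul_eq_zero.mp h2 with h' | h'
  · left; linarith
  · right; linarith
end

section
/- Let a, b, c, d, t be real numbers with t^2 ≥ max(a,b,c,d), and set u = 2t. If 2t = √(t^2-a)+√(t^2-b)+√(t^2-c)+√(t^2-d), then the numbers v = (u-√(u^2-4a))/2, x = (u-√(u^2-4b))/2, y = (u-√(u^2-4c))/2, z = (u-√(u^2-4d))/2 satisfy v(x+y+z)=a, x(v+y+z)=b, y(v+x+z)=c, z(v+x+y)=d. -/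
lemma aux_sqrt (t w : ℝ) (hw : w ≤ t^2) :
    Real.sqrt ((2*t)^2 - 4*w) = 2 * Real.sqrt (t^2 - w) := by
  have h : (2*t)^2 - 4*w = (2 * Real.sqrt (t^2 - w))^2 := by
    have := Real.sq_sqrt (by linarith : (0:ℝ) ≤ t^2 - w)
    nlinarith [this]
  rw [h, Real.sqrt_sq (by positivity)]

theorem stmt_17 (a b c d t u v x y z : ℝ)
    (ha : a ≤ t^2) (hb : b ≤ t^2) (hc : c ≤ t^2) (hd : d ≤ t^2)
    (hu : u = 2*t)
    (hsum : 2*t = Real.sqrt (t^2 - a) + Real.sqrt (t^2 - b) +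
      Real.sqrt (t^2 - c) + Real.sqrt (t^2 - d))
    (hv : v = (u - Real.sqrt (u^2 - 4*a))/2)
    (hx : x = (u - Real.sqrt (u^2 - 4*b))/2)
    (hy : y = (u - Real.sqrt (u^2 - 4*c))/2)
    (hz : z = (u - Real.sqrt (u^2 - 4*d))/2) :
    v * (x + y + z) = a ∧ x * (v + y + z) = b ∧
    y * (v + x + z) = c ∧ z * (v + x + y) = d := by
  subst hu
  rw [aux_sqrt t a ha] at hv
  rw [aux_sqrt t b hb] at hx
  rw [aux_sqrt t c hc] at hy
  rw [aux_sqrt t d hd] at hz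
  have sa := Real.sq_sqrt (by linarith : (0:ℝ) ≤ t^2 - a)
  have sb := Real.sq_sqrt (by linarith : (0:ℝ) ≤ t^2 - b)
  have sc := Real.sq_sqrt (by linarith : (0:ℝ) ≤ t^2 - c)
  have sd := Real.sq_sqrt (by linarith : (0:ℝ) ≤ t^2 - d)
  have hv' : v = t - Real.sqrt (t^2 - a) := by rw [hv]; ring
  have hx' : x = t - Real.sqrt (t^2 - b) := by rw [hx]; ring
  have hy' : y = t - Real.sqrt (t^2 - c) := by rw [hy]; ring
  have hz' : z = t - Real.sqrt (t^2 - d) := by rw [hz]; ring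
  subst hv' hx' hy' hz'
  refine ⟨?_, ?_, ?_, ?_⟩
  · linear_combination (t - Real.sqrt (t^2-a)) * hsum - sa
  · linear_combination (t - Real.sqrt (t^2-b)) * hsum - sb
  · linear_combination (t - Real.sqrt (t^2-c)) * hsum - sc
  · linear_combination (t - Real.sqrt (t^2-d)) * hsum - sd
end
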